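/- Let φ : M → N be horizontally conformal with dilatation λ, Φ = φ_* : TM → TN with Cheeger–Gromoll type metrics h_{p,q,α} on TM and h_{r,s,β} on TN. If Φ is also horizontally conformal with dilatation Λ, then for every X ∈ H^φ_x and ξ ∈ T_xM: Λ(ξ)|X|²_M = λ(x)|X|²_M + |B(X,ξ)^v_{φ_*ξ}|²_{TN}. -/

import Mathlib

open Function
open scoped BigOperators

noncomputable section

/-- A Riemannian metric on a vector space regarded as a global chart of a manifold:
a symmetric, positive definite, smoothly point-dependent bilinear form. -/
def IsMetric {P : Type*} [NormedAddCommGroup P] [NormedSpace ℝ P]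
    (g : P → P → P → ℝ) : Prop :=
  (∀ x u v, g x u v = g x v u) ∧
  (∀ x u, u ≠ 0 → 0 < g x u u) ∧
  (∀ x v, IsLinearMap ℝ (fun u => g x u v)) ∧
  (∀ u v, ContDiff ℝ (⊤ : ℕ∞) fun x => g x u v)

/-- Christoffel symbols: a smoothly point-dependent bilinear map. -/
def IsChristoffel {P : Type*} [NormedAddCommGroup P] [NormedSpace ℝ P]
    (Γ : P → P → P → P) : Prop :=
  (∀ x v, IsLinearMap ℝ (fun u => Γ x u v)) ∧
  (∀ x u, IsLinearMap ℝ (fun v => Γ x u v)) ∧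
  (∀ u v, ContDiff ℝ (⊤ : ℕ∞) fun x => Γ x u v)

/-- `Γ` are the Christoffel symbols of the Levi-Civita connection of the metric `g`:
they are symmetric (torsion-free) and the metric is covariantly constant. -/
def IsLeviCivita {P : Type*} [NormedAddCommGroup P] [NormedSpace ℝ P]
    (g : P → P → P → ℝ) (Γ : P → P → P → P) : Prop :=
  IsChristoffel Γ ∧
  (∀ x u v, Γ x u v = Γ x v u) ∧
  (∀ x u v w, fderiv ℝ (fun y => g y u v) x w = g x (Γ x w u) v + g x u (Γ x w v))

variable {E : Type*} [NormedAddCommGroup E] [NormedSpace ℝ E]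
variable {F : Type*} [NormedAddCommGroup F] [NormedSpace ℝ F]

/-- The second fundamental form `B = ∇ φ_*` of a map `φ`, in global charts:
`B(X,Y) = ∇^φ_X φ_* Y - φ_*(∇^M_X Y)`. -/
def sff (ΓM : E → E → E → E) (ΓN : F → F → F → F) (φ : E → F) (x X Y : E) : F :=
  fderiv ℝ (fun y => fderiv ℝ φ y Y) x X
    + ΓN (φ x) (fderiv ℝ φ x X) (fderiv ℝ φ x Y)
    - fderiv ℝ φ x (ΓM x X Y)

/-- The differential `Φ = φ_* : TM → TN` in global charts (`TM = E × E`, `TN = F × F`). -/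
def tmap (φ : E → F) : E × E → F × F := fun z => (φ z.1, fderiv ℝ φ z.1 z.2)

/-- The horizontal lift `u^h_ξ ∈ T_ξ TM` (at base point `x`), in global charts:
the kernel of the connection map `K(a,b) = b + Γ_x(a, ξ)`. -/
def hlift {P : Type*} [NormedAddCommGroup P] [NormedSpace ℝ P]
    (Γ : P → P → P → P) (x ξ u : P) : P × P := (u, -Γ x u ξ)

/-- The vertical lift `w^v_ξ ∈ T_ξ TM` in global charts. -/
def vlift {P : Type*} [NormedAddCommGroup P] [NormedSpace ℝ P] (w : P) : P × P := (0, w)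

/-- The Cheeger–Gromoll type metric `h_{p,q,α}` at the point `ξ ∈ T_x M`, evaluated on
`A, B ∈ T_ξ TM`, in global charts:  `h(A,B) = g(π_* A, π_* B) + ω_α(ξ)^p (g(KA,KB) + q g(KA,ξ) g(KB,ξ))`
where `ω_α(ξ) = (1 + α g(ξ,ξ))⁻¹` and `K(a,b) = b + Γ_x(a,ξ)` is the connection map. -/
def cg {P : Type*} [NormedAddCommGroup P] [NormedSpace ℝ P]
    (g : P → P → P → ℝ) (Γ : P → P → P → P) (p q α : ℝ) (x ξ : P) (A B : P × P) : ℝ :=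
  g x A.1 B.1 + ((1 + α * g x ξ ξ)⁻¹) ^ p *
    (g x (A.2 + Γ x A.1 ξ) (B.2 + Γ x B.1 ξ)
      + q * g x (A.2 + Γ x A.1 ξ) ξ * g x (B.2 + Γ x B.1 ξ) ξ)

/-- The horizontal space `H^φ_x = (ker φ_{*x})^⊥` of a map `φ` at `x`, w.r.t. the metric `g`. -/
def Hor (g : E → E → E → ℝ) (φ : E → F) (x : E) : Set E :=
  {X | ∀ Z, fderiv ℝ φ x Z = 0 → g x X Z = 0}

/-- `φ` is a horizontally conformal submersion with dilatation `lam`. -/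
def HCSub (g : E → E → E → ℝ) (gN : F → F → F → ℝ) (φ : E → F) (lam : E → ℝ) : Prop :=
  (∀ x, Surjective (fderiv ℝ φ x)) ∧ (∀ x, 0 < lam x) ∧
  ∀ x, ∀ X ∈ Hor g φ x, ∀ Y ∈ Hor g φ x,
    gN (φ x) (fderiv ℝ φ x X) (fderiv ℝ φ x Y) = lam x * g x X Y

/-- The horizontal space of `Φ = φ_* : TM → TN` at `z = (x,ξ)`, i.e. the orthogonal
complement of `ker Φ_*` with respect to the Cheeger–Gromoll type metric `h_{p,q,α}`. -/
def HorT (g : E → E → E → ℝ) (Γ : E → E → E → E) (p q α : ℝ) (φ : E → F) (z : E × E) :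
    Set (E × E) :=
  {A | ∀ A', fderiv ℝ (tmap φ) z A' = 0 → cg g Γ p q α z.1 z.2 A A' = 0}

/-- `Φ = φ_* : (TM, h_{p,q,α}) → (TN, h_{r,s,β})` is a horizontally conformal submersion
with dilatation `Lam`. -/
def HCSubT (g : E → E → E → ℝ) (Γ : E → E → E → E) (p q α : ℝ)
    (gN : F → F → F → ℝ) (ΓN : F → F → F → F) (r s β : ℝ)
    (φ : E → F) (Lam : E × E → ℝ) : Prop :=
  (∀ z, Surjective (fderiv ℝ (tmap φ) z)) ∧ (∀ z, 0 < Lam z) ∧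
  ∀ z : E × E, ∀ A ∈ HorT g Γ p q α φ z, ∀ A' ∈ HorT g Γ p q α φ z,
    cg gN ΓN r s β (φ z.1) (fderiv ℝ φ z.1 z.2)
        (fderiv ℝ (tmap φ) z A) (fderiv ℝ (tmap φ) z A')
      = Lam z * cg g Γ p q α z.1 z.2 A A'

/-- `φ` is horizontally conformal with dilatation `lam` (general form, allowing critical
points: at each point either `φ_{*x} = 0`, or `φ_{*x}` is a surjective conformal map on
the horizontal space with positive factor `lam x`). -/
def HorizConf (g : E → E → E → ℝ) (gN : F → F → F → ℝ) (φ : E → F) (lam : E → ℝ) : Prop :=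
  ∀ x, fderiv ℝ φ x = 0 ∨
    (0 < lam x ∧ Surjective (fderiv ℝ φ x) ∧
      ∀ X ∈ Hor g φ x, ∀ Y ∈ Hor g φ x,
        gN (φ x) (fderiv ℝ φ x X) (fderiv ℝ φ x Y) = lam x * g x X Y)

/-- `Φ = φ_* : (TM, h_{p,q,α}) → (TN, h_{r,s,β})` is horizontally conformal with
dilatation `Lam` (general form, allowing critical points). -/
def HorizConfT (g : E → E → E → ℝ) (Γ : E → E → E → E) (p q α : ℝ)
    (gN : F → F → F → ℝ) (ΓN : F → F → F → F) (r s β : ℝ)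
    (φ : E → F) (Lam : E × E → ℝ) : Prop :=
  ∀ z : E × E, fderiv ℝ (tmap φ) z = 0 ∨
    (0 < Lam z ∧ Surjective (fderiv ℝ (tmap φ) z) ∧
      ∀ A ∈ HorT g Γ p q α φ z, ∀ A' ∈ HorT g Γ p q α φ z,
        cg gN ΓN r s β (φ z.1) (fderiv ℝ φ z.1 z.2)
            (fderiv ℝ (tmap φ) z A) (fderiv ℝ (tmap φ) z A')
          = Lam z * cg g Γ p q α z.1 z.2 A A')

/-- `φ` is a harmonic map: its tension field, the `g`-trace of the second fundamental
form, vanishes (computed in any `g`-orthonormal basis). -/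
def Harmonic (g : E → E → E → ℝ) (ΓM : E → E → E → E) (ΓN : F → F → F → F)
    (φ : E → F) : Prop :=
  ∀ (x : E) (n : ℕ) (e : Fin n → E),
    (∀ i j, g x (e i) (e j) = if i = j then 1 else 0) →
    Submodule.span ℝ (Set.range e) = ⊤ →
    ∑ i, sff ΓM ΓN φ x (e i) (e i) = 0

/-- The tensor `S` measuring the change of the Levi-Civita connection under the conformal
change `g ↦ λ g`:  `S(X,Y) = (1/(2λ))((Xλ)Y + (Yλ)X − g(X,Y) grad λ)`. -/
def Sconf (g : E → E → E → ℝ) (lam : E → ℝ) (gradlam : E → E) (x X Y : E) : E :=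
  (2 * lam x)⁻¹ • ((fderiv ℝ lam x X) • Y + (fderiv ℝ lam x Y) • X - (g x X Y) • gradlam x)

/-!
The horizontal lift `X^h_ξ` of a `φ`-horizontal vector is `Φ`-horizontal, its `h_{p,q,α}`-norm
is `|X|²`, and `Φ_*(X^h_ξ) = (φ_*X)^h + B(X,ξ)^v`. Horizontal and vertical lifts are orthogonal
for `h_{r,s,β}`, so applying the conformality of `Φ` to `X^h_ξ` and that of `φ` to `X` gives
`Λ(ξ)|X|² = λ(x)|X|² + |B(X,ξ)^v|²`.
-/

section Lifts

variable {P : Type*} [NormedAddCommGroup P] [NormedSpace ℝ P]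
  {g : P → P → P → ℝ} {Γ : P → P → P → P} {p q α : ℝ} {x ξ : P}

lemma cg_hlift_left (hg : ∀ v, IsLinearMap ℝ fun u => g x u v) (u : P) (B : P × P) :
    cg g Γ p q α x ξ (hlift Γ x ξ u) B = g x u B.1 := by
  simp [cg, hlift, (hg _).map_zero]

lemma cg_hlift_hlift (hg : ∀ v, IsLinearMap ℝ fun u => g x u v) (u v : P) :
    cg g Γ p q α x ξ (hlift Γ x ξ u) (hlift Γ x ξ v) = g x u v :=
  cg_hlift_left hg u _

lemma cg_hlift_add_vlift (hg : ∀ v, IsLinearMap ℝ fun u => g x u v)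
    (hΓ : IsLinearMap ℝ fun u => Γ x u ξ) (u w : P) :
    cg g Γ p q α x ξ (hlift Γ x ξ u + vlift w) (hlift Γ x ξ u + vlift w)
      = g x u u + cg g Γ p q α x ξ (vlift w) (vlift w) := by
  simp [cg, hlift, vlift, (hg _).map_zero, hΓ.map_zero]

end Lifts

lemma fderiv_tmap_apply {φ : E → F} {x : E} (hφ : DifferentiableAt ℝ φ x)
    (hφ' : DifferentiableAt ℝ (fderiv ℝ φ) x) (ξ a b : E) :
    fderiv ℝ (tmap φ) (x, ξ) (a, b)
      = (fderiv ℝ φ x a, fderiv ℝ (fderiv ℝ φ) x a ξ + fderiv ℝ φ x b) := by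
  have hbase : HasFDerivAt (fun z : E × E => φ z.1)
      ((fderiv ℝ φ x).comp (ContinuousLinearMap.fst ℝ E E)) (x, ξ) :=
    hφ.hasFDerivAt.comp (x, ξ) hasFDerivAt_fst
  have hderiv : HasFDerivAt (fun z : E × E => fderiv ℝ φ z.1)
      ((fderiv ℝ (fderiv ℝ φ) x).comp (ContinuousLinearMap.fst ℝ E E)) (x, ξ) :=
    hφ'.hasFDerivAt.comp (x, ξ) hasFDerivAt_fst
  have hfibre := hderiv.clm_apply (hasFDerivAt_snd (𝕜 := ℝ) (p := ((x, ξ) : E × E)))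
  rw [show tmap φ = fun z : E × E => (φ z.1, fderiv ℝ φ z.1 z.2) from rfl,
    (hbase.prodMk hfibre).fderiv]
  simp [add_comm]

lemma sff_eq {ΓM : E → E → E → E} {ΓN : F → F → F → F} {φ : E → F} {x : E}
    (hφ' : DifferentiableAt ℝ (fderiv ℝ φ) x) (X Y : E) :
    sff ΓM ΓN φ x X Y
      = fderiv ℝ (fderiv ℝ φ) x X Y + ΓN (φ x) (fderiv ℝ φ x X) (fderiv ℝ φ x Y)
        - fderiv ℝ φ x (ΓM x X Y) := by
  rw [sff, fderiv_clm_apply hφ' (differentiableAt_const Y)]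
  simp

lemma fderiv_tmap_hlift {ΓM : E → E → E → E} {ΓN : F → F → F → F} {φ : E → F} {x : E}
    (hφ : DifferentiableAt ℝ φ x) (hφ' : DifferentiableAt ℝ (fderiv ℝ φ) x) (ξ X : E) :
    fderiv ℝ (tmap φ) (x, ξ) (hlift ΓM x ξ X)
      = hlift ΓN (φ x) (fderiv ℝ φ x ξ) (fderiv ℝ φ x X) + vlift (sff ΓM ΓN φ x X ξ) := by
  rw [hlift, fderiv_tmap_apply hφ hφ', sff_eq hφ']
  ext <;> simp only [hlift, vlift, Prod.fst_add, Prod.snd_add, map_neg, add_zero]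
  abel

lemma hlift_mem_horT {g : E → E → E → ℝ} {Γ : E → E → E → E} {p q α : ℝ} {φ : E → F} {x : E}
    (hg : ∀ v, IsLinearMap ℝ fun u => g x u v)
    (hφ : DifferentiableAt ℝ φ x) (hφ' : DifferentiableAt ℝ (fderiv ℝ φ) x)
    (ξ : E) {X : E} (hX : X ∈ Hor g φ x) :
    hlift Γ x ξ X ∈ HorT g Γ p q α φ (x, ξ) := by
  rintro ⟨a, b⟩ hab
  rw [fderiv_tmap_apply hφ hφ', Prod.mk_eq_zero] at hab
  exact (cg_hlift_left hg X (a, b)).trans (hX a hab.1)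

theorem stmt12_general
    (gM : E → E → E → ℝ) (gN : F → F → F → ℝ)
    (ΓM : E → E → E → E) (ΓN : F → F → F → F)
    (hgM : IsMetric gM) (hgN : IsMetric gN)
    (hΓN : IsLeviCivita gN ΓN)
    (φ : E → F) (hφ : ContDiff ℝ (⊤ : ℕ∞) φ)
    (p q α r s β : ℝ)
    (lam : E → ℝ)
    (hHC : HCSub gM gN φ lam)
    (Lam : E × E → ℝ)
    (hHCT : HCSubT gM ΓM p q α gN ΓN r s β φ Lam)
    (x ξ : E) (X : E) (hX : X ∈ Hor gM φ x) :
    Lam (x, ξ) * gM x X X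
      = lam x * gM x X X
        + cg gN ΓN r s β (φ x) (fderiv ℝ φ x ξ)
            (vlift (sff ΓM ΓN φ x X ξ)) (vlift (sff ΓM ΓN φ x X ξ)) := by
  have hφx : DifferentiableAt ℝ φ x := hφ.differentiable (by simp) x
  have hφ'x : DifferentiableAt ℝ (fderiv ℝ φ) x :=
    (hφ.fderiv_right ENat.coe_top_add_one.le).differentiable (by simp) x
  have hA := hlift_mem_horT (Γ := ΓM) (p := p) (q := q) (α := α) (hgM.2.2.1 x) hφx hφ'x ξ hX
  have key := hHCT.2.2 (x, ξ) _ hA _ hA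
  rw [fderiv_tmap_hlift hφx hφ'x, cg_hlift_add_vlift (hgN.2.2.1 _) (hΓN.1.1 _ _),
    cg_hlift_hlift (hgM.2.2.1 x), hHC.2.2 x X hX X hX] at key
  exact key.symm

/-- Lemma 5, equation (13). Let `φ` be horizontally conformal with
dilatation `λ` and let `Φ = φ_* : (TM, h_{p,q,α}) → (TN, h_{r,s,β})` be horizontally
conformal with dilatation `Λ`. Then for every horizontal `X ∈ H^φ_x` and `ξ ∈ T_x M`:
`Λ(ξ)|X|²_M = λ(x)|X|²_M + |B(X,ξ)^v_{φ_*ξ}|²_{TN}`. -/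
theorem stmt12
    (gM : E → E → E → ℝ) (gN : F → F → F → ℝ)
    (ΓM : E → E → E → E) (ΓN : F → F → F → F)
    (hgM : IsMetric gM) (hgN : IsMetric gN)
    (hΓM : IsLeviCivita gM ΓM) (hΓN : IsLeviCivita gN ΓN)
    (φ : E → F) (hφ : ContDiff ℝ (⊤ : ℕ∞) φ)
    (p q α r s β : ℝ) (hq : 0 ≤ q) (hs : 0 ≤ s) (hα : 0 < α) (hβ : 0 < β)
    (lam : E → ℝ) (hlam : ContDiff ℝ (⊤ : ℕ∞) lam)
    (hHC : HCSub gM gN φ lam)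
    (Lam : E × E → ℝ)
    (hHCT : HCSubT gM ΓM p q α gN ΓN r s β φ Lam)
    (x ξ : E) (X : E) (hX : X ∈ Hor gM φ x) :
    Lam (x, ξ) * gM x X X
      = lam x * gM x X X
        + cg gN ΓN r s β (φ x) (fderiv ℝ φ x ξ)
            (vlift (sff ΓM ΓN φ x X ξ)) (vlift (sff ΓM ΓN φ x X ξ)) :=
  stmt12_general gM gN ΓM ΓN hgM hgN hΓN φ hφ p q α r s β lam hHC Lam hHCT x ξ X hX

end
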